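/- arXiv:2104.14038 — 4 statements merged into one kernel-verified Lean document; each statement's English description precedes it below -/
import Mathlib

section
/- Let μ₀ > 0, λ ≠ 0, a₁, b₁ be real numbers and τ ∈ ℂ. For complex numbers F and W define Φ₁⁺ = F, Φ₁⁻ = conj(F), Φ₂⁺ = i·conj(τ)·W/(λμ₀), Φ₂⁻ = −i·τ·conj(W)/(λμ₀). Then the pair of conditions Im F = b₁ and Re F = (1/λ)·Re(conj(τ)·W/μ₀) + a₁ holds if and only if the pair of conditions Φ₁⁺ = Φ₁⁻ + 2i·b₁ and Φ₂⁺ = 2i·Φ₁⁻ + Φ₂⁻ − 2i·(a₁ − i·b₁) holds. -/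
open Complex ComplexConjugate

/-! With `c = conj τ W / (λ μ₀)` one has `Φ₂⁻ = -i conj c`, so the second relation reads
`i (c + conj c) = 2i (conj F - (a₁ - i b₁))`, i.e. `Re c = conj F - (a₁ - i b₁)`. Its imaginary part
is `Im F = b₁`, which is also the content of the first relation, and its real part is
`Re F = Re c + a₁`. -/

theorem Complex.eq_conj_add_two_mul_I_mul_iff (F : ℂ) (b : ℝ) :
    F = conj F + 2 * I * b ↔ F.im = b := by
  simp only [Complex.ext_iff, add_re, add_im, conj_re, conj_im, mul_re, mul_im, I_re, I_im,
    ofReal_re, ofReal_im, re_ofNat, im_ofNat]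
  constructor
  · rintro ⟨-, h⟩
    linarith
  · intro h
    constructor <;> linarith

theorem Complex.I_mul_eq_two_mul_I_mul_add_neg_I_mul_conj_sub_iff (z w v : ℂ) :
    I * z = 2 * I * w + -I * conj z - 2 * I * v ↔ (z.re : ℂ) = w - v := by
  have h2I : (2 * I : ℂ) ≠ 0 := mul_ne_zero two_ne_zero I_ne_zero
  have hsum : I * z = 2 * I * w + -I * conj z - 2 * I * v ↔ 2 * I * (z.re : ℂ) = 2 * I * (w - v) := by
    have hadd : z + conj z = 2 * z.re := by exact_mod_cast add_conj z
    constructor <;> intro h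
    · linear_combination h - I * hadd
    · linear_combination h + I * hadd
  rw [hsum, mul_right_inj' h2I]

theorem Complex.ofReal_eq_conj_sub_iff (x a b : ℝ) (F : ℂ) :
    (x : ℂ) = conj F - (a - I * b) ↔ F.im = b ∧ F.re = x + a := by
  simp only [Complex.ext_iff, sub_re, sub_im, conj_re, conj_im, mul_re, mul_im, I_re, I_im,
    ofReal_re, ofReal_im]
  constructor
  · rintro ⟨hre, him⟩
    constructor <;> linarith
  · rintro ⟨him, hre⟩
    constructor <;> linarith

theorem stmt0_general (μ₀ lam a₁ b₁ : ℝ) (τ F W : ℂ) :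
    (F.im = b₁ ∧ F.re = (1 / lam) * ((conj τ * W / (μ₀ : ℂ)).re) + a₁) ↔
    (F = conj F + 2 * I * (b₁ : ℂ) ∧
      I * conj τ * W / ((lam : ℂ) * (μ₀ : ℂ)) =
        2 * I * conj F + (-(I) * τ * conj W / ((lam : ℂ) * (μ₀ : ℂ)))
          - 2 * I * ((a₁ : ℂ) - I * (b₁ : ℂ))) := by
  set c := conj τ * W / (μ₀ : ℂ)
  have hz : I * conj τ * W / ((lam : ℂ) * (μ₀ : ℂ)) = I * (c / lam) := by ring
  have hconj : -(I) * τ * conj W / ((lam : ℂ) * (μ₀ : ℂ)) = -I * conj (c / lam) := by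
    simp only [c, map_div₀, map_mul, conj_conj, conj_ofReal]
    ring
  have hre : (c / lam).re = 1 / lam * c.re := by rw [div_ofReal_re, one_div_mul_eq_div]
  rw [hz, hconj, Complex.I_mul_eq_two_mul_I_mul_add_neg_I_mul_conj_sub_iff, hre,
    Complex.ofReal_eq_conj_sub_iff, Complex.eq_conj_add_two_mul_I_mul_iff]
  rw [← and_assoc, and_self]

theorem stmt0 (μ₀ lam a₁ b₁ : ℝ) (hμ : 0 < μ₀) (hlam : lam ≠ 0)
    (τ F W : ℂ) :
    (F.im = b₁ ∧ F.re = (1 / lam) * ((conj τ * W / (μ₀ : ℂ)).re) + a₁) ↔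
    (F = conj F + 2 * I * (b₁ : ℂ) ∧
      I * conj τ * W / ((lam : ℂ) * (μ₀ : ℂ)) =
        2 * I * conj F + (-(I) * τ * conj W / ((lam : ℂ) * (μ₀ : ℂ)))
          - 2 * I * ((a₁ : ℂ) - I * (b₁ : ℂ))) :=
  stmt0_general μ₀ lam a₁ b₁ τ F W
end

section
/- Let μ₀ > 0, λ ≠ 0, b₀ be real numbers and τ ∈ ℂ with τ ≠ 0. For complex numbers F and W define Φ₁⁺ = F, Φ₁⁻ = conj(F), Φ₂⁺ = i·conj(τ)·W/(λμ₀), Φ₂⁻ = −i·τ·conj(W)/(λμ₀). Then the pair of conditions Im W = 0 and Im F = b₀ − Im(conj(τ)·W/μ₀) holds if and only if the pair of conditions Φ₁⁺ = Φ₁⁻ + iλ(1 − conj(τ)/τ)·Φ₂⁻ + 2i·b₀ and Φ₂⁺ = −(conj(τ)/τ)·Φ₂⁻ holds. -/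
/-!
Since `conj τ ≠ 0`, the second jump relation says exactly `conj W = W`, i.e. `Im W = 0`.
For real `W` the coupling term `iλ(1 - conj τ/τ) Φ₂⁻` equals `(τ - conj τ) W / μ₀`, which is
`-2i Im(conj τ W / μ₀)`, so the first relation reads `F - conj F = 2i (b₀ - Im(conj τ W / μ₀))`,
i.e. it is the condition on `Im F`.
-/

open Complex ComplexConjugate

namespace Complex

theorem eq_conj_add_two_mul_I_iff_im_eq (F : ℂ) (r : ℝ) :
    F = conj F + 2 * I * r ↔ F.im = r := by
  rw [← sub_eq_iff_eq_add', sub_conj, Complex.ext_iff]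
  simp

theorem mul_eq_mul_conj_iff_im_eq_zero {c : ℂ} (hc : c ≠ 0) (W : ℂ) :
    c * W = c * conj W ↔ W.im = 0 := by
  rw [mul_right_inj' hc, eq_comm, conj_eq_iff_im]

theorem sub_conj_mul_div_ofReal_of_conj_eq (τ W : ℂ) (μ : ℝ) (hW : conj W = W) :
    (τ - conj τ) * W / μ = -(2 * I * (conj τ * W / μ).im) := by
  have h := sub_conj (conj τ * W / μ)
  rw [map_div₀, map_mul, conj_conj, conj_ofReal, hW] at h
  push_cast at h
  linear_combination -h

end Complex

theorem stmt1 (μ₀ lam b₀ : ℝ) (hμ : 0 < μ₀) (hlam : lam ≠ 0)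
    (τ F W : ℂ) (hτ : τ ≠ 0) :
    (W.im = 0 ∧ F.im = b₀ - (conj τ * W / (μ₀ : ℂ)).im) ↔
    (F = conj F + I * (lam : ℂ) * (1 - conj τ / τ) * (-(I) * τ * conj W / ((lam : ℂ) * (μ₀ : ℂ)))
        + 2 * I * (b₀ : ℂ) ∧
      I * conj τ * W / ((lam : ℂ) * (μ₀ : ℂ)) =
        -(conj τ / τ) * (-(I) * τ * conj W / ((lam : ℂ) * (μ₀ : ℂ)))) := by
  have hμ' : (μ₀ : ℂ) ≠ 0 := by exact_mod_cast hμ.ne'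
  have hlam' : (lam : ℂ) ≠ 0 := by exact_mod_cast hlam
  have jump₂ : I * conj τ * W / ((lam : ℂ) * (μ₀ : ℂ)) =
      -(conj τ / τ) * (-(I) * τ * conj W / ((lam : ℂ) * (μ₀ : ℂ))) ↔ W.im = 0 := by
    have hc : I * conj τ / ((lam : ℂ) * (μ₀ : ℂ)) ≠ 0 := by simp [hτ, hμ', hlam']
    have hRHS : -(conj τ / τ) * (-(I) * τ * conj W / ((lam : ℂ) * (μ₀ : ℂ))) =
        I * conj τ / ((lam : ℂ) * (μ₀ : ℂ)) * conj W := by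
      field_simp
    rw [hRHS, ← mul_eq_mul_conj_iff_im_eq_zero hc, mul_div_right_comm]
  have jump₁ (hW : W.im = 0) :
      F = conj F + I * (lam : ℂ) * (1 - conj τ / τ) * (-(I) * τ * conj W / ((lam : ℂ) * (μ₀ : ℂ)))
        + 2 * I * (b₀ : ℂ) ↔ F.im = b₀ - (conj τ * W / (μ₀ : ℂ)).im := by
    have hW' : conj W = W := conj_eq_iff_im.mpr hW
    have hcoupling : I * (lam : ℂ) * (1 - conj τ / τ) *
        (-(I) * τ * conj W / ((lam : ℂ) * (μ₀ : ℂ))) = (τ - conj τ) * W / μ₀ := by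
      rw [hW']
      field_simp
      linear_combination (conj τ - τ) * W * I_sq
    rw [hcoupling, sub_conj_mul_div_ofReal_of_conj_eq τ W μ₀ hW',
      ← eq_conj_add_two_mul_I_iff_im_eq]
    push_cast
    constructor <;> intro h <;> linear_combination h
  rw [jump₂]
  exact ⟨fun ⟨hW, hF⟩ => ⟨(jump₁ hW).2 hF, hW⟩, fun ⟨hF, hW⟩ => ⟨hW, (jump₁ hW).1 hF⟩⟩
end

section
/- Let m > 1 and ξ₀ < 0 be real and let N₀, N₁, N₂, b₀, b₁ be real. For real η < ξ₀ define u(η) = √(η(1−η)(η−m)) (the positive real root) and Φ₁(η) = N₀ + i(N₁+iN₂)·(u(η)+u(ξ₀))/(η−ξ₀) + i(N₁−iN₂)·(u(η)−u(ξ₀))/(η−ξ₀) + (i·u(η)/(π(η−ξ₀)))·[ b₁·∫_0^1 (ξ−ξ₀) dξ/(√(ξ(1−ξ)(m−ξ))·(ξ−η)) − b₀·∫_m^∞ (ξ−ξ₀) dξ/(√(ξ(ξ−1)(ξ−m))·(ξ−η)) ], where u(ξ₀) = √(ξ₀(1−ξ₀)(ξ₀−m)) > 0. Then Φ₁(η)/√(−η)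 converges to −2iN₁ as η → −∞. -/
/-!
After division by `√(-η)`, the two `N`-terms each contribute `u(η) / ((η - ξ₀) √(-η)) → -1`,
since `u(η) = √(-η) · √((1 - η)(m - η))`, while the `N₀`- and `u(ξ₀)`-terms decay. The two
Cauchy-type integrals tend to `0` by dominated convergence: for `η ≤ ξ₀` and `x` on a slit the
factor `(x - ξ₀) / (x - η)` lies in `[0, 1]` and tends to `0`, and the weights
`1 / √|x (1 - x)(x - m)|` are integrable on both slits (inverse square-root singularities at the
endpoints, decay like `x^(-3/2)` at infinity).
-/

open Complex MeasureTheory intervalIntegral Filter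

/-- The branch `u(η) = √(η(1−η)(η−m))` (positive real root) on the negative real axis. -/
noncomputable def uNeg (m η : ℝ) : ℝ := Real.sqrt (η * (1 - η) * (η - m))

/-- The general solution `Φ₁` of the first scalar Riemann–Hilbert problem, evaluated at a
real point `η < ξ₀` of the negative real axis, with `u(η) = √(η(1−η)(η−m)) > 0`. -/
noncomputable def Phi1R (m ξ₀ N₀ N₁ N₂ b₀ b₁ : ℝ) (η : ℝ) : ℂ :=
  (N₀ : ℂ)
    + I * ((N₁ : ℂ) + I * (N₂ : ℂ)) * ((uNeg m η : ℂ) + (uNeg m ξ₀ : ℂ)) / ((η : ℂ) - (ξ₀ : ℂ))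
    + I * ((N₁ : ℂ) - I * (N₂ : ℂ)) * ((uNeg m η : ℂ) - (uNeg m ξ₀ : ℂ)) / ((η : ℂ) - (ξ₀ : ℂ))
    + (I * (uNeg m η : ℂ) / ((Real.pi : ℂ) * ((η : ℂ) - (ξ₀ : ℂ)))) *
        ((b₁ : ℂ) * (∫ x in (0:ℝ)..1,
            ((x : ℂ) - (ξ₀ : ℂ)) / ((Real.sqrt (x * (1 - x) * (m - x)) : ℂ) * ((x : ℂ) - (η : ℂ))))
          - (b₀ : ℂ) * (∫ x in Set.Ioi m,
            ((x : ℂ) - (ξ₀ : ℂ)) / ((Real.sqrt (x * (x - 1) * (x - m)) : ℂ) * ((x : ℂ) - (η : ℂ)))))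

open Set Topology

lemma tendsto_const_sub_atBot_atTop (a : ℝ) : Tendsto (fun η : ℝ => a - η) atBot atTop :=
  tendsto_atTop_add_const_left _ a tendsto_neg_atBot_atTop

lemma tendsto_const_sub_div_const_sub_atBot (a b : ℝ) :
    Tendsto (fun η : ℝ => (a - η) / (b - η)) atBot (𝓝 1) := by
  have h := (tendsto_const_nhds (x := a - b)).div_atTop (tendsto_const_sub_atBot_atTop b)
  rw [← add_zero (1 : ℝ)]
  refine (h.const_add 1).congr' ?_
  filter_upwards [eventually_lt_atBot b] with η hη
  field_simp [(sub_pos.2 hη).ne']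
  ring

lemma tendsto_inv_sqrt_neg_atBot : Tendsto (fun η : ℝ => (√(-η))⁻¹) atBot (𝓝 0) :=
  (Real.tendsto_sqrt_atTop.comp tendsto_neg_atBot_atTop).inv_tendsto_atTop

lemma tendsto_inv_sub_atBot (c : ℝ) : Tendsto (fun η : ℝ => (η - c)⁻¹) atBot (𝓝 0) :=
  (tendsto_atBot_add_const_right _ (-c) tendsto_id).inv_tendsto_atBot

lemma uNeg_eq_sqrt_neg_mul (m : ℝ) {η : ℝ} (hη : η ≤ 0) :
    uNeg m η = √(-η) * √((1 - η) * (m - η)) := by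
  rw [uNeg, ← Real.sqrt_mul (neg_nonneg.2 hη)]
  ring_nf

lemma tendsto_uNeg_div_atBot (m ξ₀ : ℝ) :
    Tendsto (fun η : ℝ => uNeg m η / ((η - ξ₀) * √(-η))) atBot (𝓝 (-1)) := by
  have h := ((tendsto_const_sub_div_const_sub_atBot 1 ξ₀).mul (tendsto_const_sub_div_const_sub_atBot m ξ₀)).sqrt.neg
  rw [mul_one, Real.sqrt_one] at h
  refine h.congr' ?_
  filter_upwards [eventually_lt_atBot (min 0 (min 1 (min m ξ₀)))] with η hη
  simp only [lt_min_iff] at hη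
  obtain ⟨hη0, hη1, hηm, hηξ⟩ := hη
  rw [uNeg_eq_sqrt_neg_mul m hη0.le, div_mul_div_comm, Real.sqrt_div (by nlinarith),
    ← sq, Real.sqrt_sq (by linarith), mul_comm (√(-η)),
    mul_div_mul_right _ _ (Real.sqrt_pos.2 (by linarith)).ne', ← neg_sub ξ₀ η, div_neg]

theorem tendsto_setIntegral_sub_div_sub_smul_atBot {E : Type*} [NormedAddCommGroup E]
    [NormedSpace ℝ E] {μ : Measure ℝ} {s : Set ℝ} {g : ℝ → E} {c : ℝ} (hs : MeasurableSet s)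
    (hsc : s ⊆ Ici c) (hg : IntegrableOn g s μ) :
    Tendsto (fun η : ℝ => ∫ x in s, ((x - c) / (x - η)) • g x ∂μ) atBot (𝓝 0) := by
  have hmeas : ∀ η : ℝ, AEStronglyMeasurable (fun x => ((x - c) / (x - η)) • g x) (μ.restrict s) :=
    fun η => (by fun_prop : Measurable fun x : ℝ => (x - c) / (x - η)).aestronglyMeasurable.smul
      hg.aestronglyMeasurable
  have hbound : ∀ᶠ η in atBot, ∀ᵐ x ∂μ.restrict s, ‖((x - c) / (x - η)) • g x‖ ≤ ‖g x‖ := by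
    filter_upwards [eventually_lt_atBot c] with η hη
    refine ae_restrict_of_forall_mem hs fun x hx => ?_
    have hxc : c ≤ x := hsc hx
    rw [norm_smul]
    refine mul_le_of_le_one_left (norm_nonneg _) ?_
    rw [Real.norm_eq_abs, abs_div, div_le_one (by rw [abs_pos]; linarith),
      abs_of_nonneg (by linarith), abs_of_pos (by linarith)]
    linarith
  have hlim : ∀ᵐ x ∂μ.restrict s,
      Tendsto (fun η : ℝ => ((x - c) / (x - η)) • g x) atBot (𝓝 0) :=
    ae_of_all _ fun x => by
      simpa using (tendsto_const_nhds.div_atTop (tendsto_const_sub_atBot_atTop x)).smul_const (g x)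
  simpa using tendsto_integral_filter_of_dominated_convergence _
    (Eventually.of_forall hmeas) hbound hg.norm hlim

lemma intervalIntegrable_inv_sqrt {c : ℝ} (hc : 0 ≤ c) :
    IntervalIntegrable (fun x : ℝ => (√x)⁻¹) volume 0 c := by
  rw [intervalIntegrable_iff_integrableOn_Ioc_of_le hc]
  refine ((intervalIntegrable_iff_integrableOn_Ioc_of_le hc).1
    (intervalIntegrable_rpow' (r := -(1 / 2)) (by norm_num))).congr_fun (fun x hx => ?_)
    measurableSet_Ioc
  simp only [Real.rpow_neg hx.1.le, Real.sqrt_eq_rpow]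

lemma integrableOn_inv_sqrt_sub_right_Ioo {a b : ℝ} (hab : a ≤ b) :
    IntegrableOn (fun x : ℝ => (√(x - a))⁻¹) (Ioo a b) := by
  have h := (intervalIntegrable_inv_sqrt (sub_nonneg.2 hab)).comp_sub_right a
  rw [zero_add, sub_add_cancel] at h
  exact (intervalIntegrable_iff_integrableOn_Ioo_of_le hab).1 h

lemma integrableOn_inv_sqrt_sub_left_Ioo {a b : ℝ} (hab : a ≤ b) :
    IntegrableOn (fun x : ℝ => (√(b - x))⁻¹) (Ioo a b) := by
  have h := (intervalIntegrable_inv_sqrt (sub_nonneg.2 hab)).comp_sub_left b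
  rw [sub_zero, sub_sub_cancel] at h
  exact (intervalIntegrable_iff_integrableOn_Ioo_of_le hab).1 h.symm

lemma integrableOn_inv_mul_sqrt_Ioi {c : ℝ} (hc : 0 < c) :
    IntegrableOn (fun x : ℝ => (x * √x)⁻¹) (Ioi c) := by
  refine (integrableOn_Ioi_rpow_of_lt (a := -(3 / 2)) (by norm_num) hc).congr_fun
    (fun x hx => ?_) measurableSet_Ioi
  have hx : 0 < x := hc.trans hx
  simp only [Real.rpow_neg hx.le, Real.sqrt_eq_rpow]
  rw [show (3 / 2 : ℝ) = 1 + 1 / 2 by norm_num, Real.rpow_add hx, Real.rpow_one]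

lemma inv_sqrt_mul_sqrt_one_sub_le {x : ℝ} (h0 : 0 < x) (h1 : x < 1) :
    (√x * √(1 - x))⁻¹ ≤ (√x)⁻¹ + (√(1 - x))⁻¹ := by
  have ha := Real.sqrt_pos.2 h0
  have hb := Real.sqrt_pos.2 (sub_pos.2 h1)
  -- `√x ≥ x` and `√(1 - x) ≥ 1 - x` on `[0, 1]`
  have hsum : 1 ≤ √x + √(1 - x) := by
    have := Real.sq_sqrt h0.le
    have := Real.sq_sqrt (sub_pos.2 h1).le
    nlinarith [Real.sqrt_le_one.2 h1.le, Real.sqrt_le_one.2 (by linarith : 1 - x ≤ 1)]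
  rw [inv_add_inv ha.ne' hb.ne', ← one_div]
  exact div_le_div_of_nonneg_right hsum (by positivity)

lemma integrableOn_inv_sqrt_slit_zero_one {m : ℝ} (hm : 1 < m) :
    IntegrableOn (fun x : ℝ => (√(x * (1 - x) * (m - x)))⁻¹) (Ioo 0 1) := by
  refine Integrable.mono' (((integrableOn_inv_sqrt_sub_right_Ioo zero_le_one).add
    (integrableOn_inv_sqrt_sub_left_Ioo zero_le_one)).const_mul (√(m - 1))⁻¹)
    (by fun_prop : Measurable _).aestronglyMeasurable
    (ae_restrict_of_forall_mem measurableSet_Ioo fun x ⟨h0, h1⟩ => ?_)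
  have hm1 := Real.sqrt_pos.2 (sub_pos.2 hm)
  simp only [Pi.add_apply, sub_zero]
  rw [Real.norm_of_nonneg (by positivity), Real.sqrt_mul (by nlinarith),
    Real.sqrt_mul h0.le, mul_inv, mul_comm]
  gcongr ?_ * ?_
  · exact inv_anti₀ hm1 (Real.sqrt_le_sqrt (by linarith))
  · exact inv_sqrt_mul_sqrt_one_sub_le h0 h1

lemma integrableOn_inv_sqrt_slit_Ioi {m : ℝ} (hm : 1 < m) :
    IntegrableOn (fun x : ℝ => (√(x * (x - 1) * (x - m)))⁻¹) (Ioi m) := by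
  have hmeas : Measurable fun x : ℝ => (√(x * (x - 1) * (x - m)))⁻¹ := by fun_prop
  rw [← Ioc_union_Ioi_eq_Ioi (le_add_of_nonneg_right zero_le_one)]
  refine IntegrableOn.union ?_ ?_
  · refine Integrable.mono' ((integrableOn_Ioc_iff_integrableOn_Ioo (by finiteness)).2
      ((integrableOn_inv_sqrt_sub_right_Ioo (by linarith : m ≤ m + 1)).const_mul
        (√(m * (m - 1)))⁻¹))
      hmeas.aestronglyMeasurable
      (ae_restrict_of_forall_mem measurableSet_Ioc fun x ⟨hxm, _⟩ => ?_)
    rw [Real.norm_of_nonneg (by positivity), Real.sqrt_mul (by nlinarith), mul_inv]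
    gcongr
    nlinarith
  · refine Integrable.mono' ((integrableOn_inv_mul_sqrt_Ioi (by linarith : (0 : ℝ) < m + 1)
      ).const_mul (m + 1)) hmeas.aestronglyMeasurable
      (ae_restrict_of_forall_mem measurableSet_Ioi fun x (hx : m + 1 < x) => ?_)
    have hx0 : 0 < x := by linarith
    have hx1 : 0 ≤ x - 1 := by linarith
    -- `x (x - 1) (x - m) ≥ x³ / (m + 1)²` because `x - 1 ≥ x - m ≥ x / (m + 1)` for `x ≥ m + 1`
    have hlow : x * √x / (m + 1) ≤ √(x * (x - 1) * (x - m)) := by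
      refine Real.le_sqrt_of_sq_le ?_
      rw [div_pow, mul_pow, Real.sq_sqrt hx0.le, div_le_iff₀ (by positivity)]
      have h1 : x ≤ (m + 1) * (x - m) := by nlinarith
      have h2 : x ≤ (m + 1) * (x - 1) := by nlinarith
      calc x ^ 2 * x = x * x * x := by ring
        _ ≤ x * ((m + 1) * (x - 1)) * ((m + 1) * (x - m)) := by gcongr
        _ = x * (x - 1) * (x - m) * (m + 1) ^ 2 := by ring
    rw [Real.norm_of_nonneg (by positivity), ← div_eq_mul_inv, ← inv_div]
    exact inv_anti₀ (by positivity) hlow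

lemma ofReal_sub_div_mul_sub (x c w η : ℝ) :
    ((x : ℂ) - c) / ((w : ℂ) * ((x : ℂ) - η)) = ((x - c) / (x - η)) • ((w⁻¹ : ℝ) : ℂ) := by
  rw [Complex.real_smul]
  push_cast
  simp only [div_eq_mul_inv, mul_inv]
  ring

lemma tendsto_slitIntegral_zero_one_atBot {m ξ₀ : ℝ} (hm : 1 < m) (hξ₀ : ξ₀ ≤ 0) :
    Tendsto (fun η : ℝ => ∫ x in (0:ℝ)..1,
      ((x : ℂ) - ξ₀) / ((√(x * (1 - x) * (m - x)) : ℂ) * ((x : ℂ) - η))) atBot (𝓝 0) := by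
  simp_rw [intervalIntegral.integral_of_le zero_le_one, integral_Ioc_eq_integral_Ioo,
    ofReal_sub_div_mul_sub]
  exact tendsto_setIntegral_sub_div_sub_smul_atBot measurableSet_Ioo
    (fun x hx => hξ₀.trans hx.1.le) (integrableOn_inv_sqrt_slit_zero_one hm).ofReal

lemma tendsto_slitIntegral_Ioi_atBot {m ξ₀ : ℝ} (hm : 1 < m) (hξ₀ : ξ₀ ≤ m) :
    Tendsto (fun η : ℝ => ∫ x in Ioi m,
      ((x : ℂ) - ξ₀) / ((√(x * (x - 1) * (x - m)) : ℂ) * ((x : ℂ) - η))) atBot (𝓝 0) := by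
  simp_rw [ofReal_sub_div_mul_sub]
  exact tendsto_setIntegral_sub_div_sub_smul_atBot measurableSet_Ioi
    (fun x hx => hξ₀.trans (le_of_lt hx)) (integrableOn_inv_sqrt_slit_Ioi hm).ofReal

theorem stmt10 (m ξ₀ N₀ N₁ N₂ b₀ b₁ : ℝ) (hm : 1 < m) (hξ₀ : ξ₀ < 0) :
    Tendsto (fun η : ℝ => Phi1R m ξ₀ N₀ N₁ N₂ b₀ b₁ η / ((Real.sqrt (-η) : ℝ) : ℂ))
      atBot (nhds (-(2 * I * (N₁ : ℂ)))) := by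
  have hr := (tendsto_uNeg_div_atBot m ξ₀).ofReal
  have he := tendsto_inv_sqrt_neg_atBot.ofReal
  have hs := (he.mul (tendsto_inv_sub_atBot ξ₀).ofReal).const_mul (uNeg m ξ₀ : ℂ)
  have hJ₁ := tendsto_slitIntegral_zero_one_atBot hm hξ₀.le
  have hJ₂ := tendsto_slitIntegral_Ioi_atBot hm (by linarith)
  have hlim := (((he.const_mul (N₀ : ℂ)).add ((hr.add hs).const_mul (I * (N₁ + I * N₂)))).add
    ((hr.sub hs).const_mul (I * (N₁ - I * N₂)))).add
    ((hr.const_mul (I / Real.pi)).mul ((hJ₁.const_mul (b₁ : ℂ)).sub (hJ₂.const_mul (b₀ : ℂ))))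
  convert hlim using 1
  · funext η
    simp only [Phi1R]
    push_cast
    simp only [div_eq_mul_inv, mul_inv]
    ring
  · push_cast
    ring_nf
end

section
/- Let n ≥ 1 be an integer, let m > 1 and k₁, …, k_{2n} be real numbers with k_j ≤ 1 for all j, let ξ₀, …, ξ_n be real numbers, let c ∈ ℂ, and let ζ ∈ ℂ with ζ ∉ [m,∞) and ζ ≠ ξ_j for all j = 0, …, n. Then, as the real variable ξ tends to +∞, ξ^{3/2} · (1/2)·[ 1 + (c/(i·√((ξ−m)·∏_{j=1}^{2n}(ξ−k_j))))·∏_{j=0}^{n} (ξ−ξ_j)/(ζ−ξ_j) ]·( 1/(ξ−ζ) − 1/(ξ−ξ₀) ) converges to c·(ζ−ξ₀)/(2i·∏_{j=0}^{n}(ζ−ξ_j)). -/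
/-!
With `Q = ∏ⱼ (ζ - ξⱼ)`, `N(x) = ∏ⱼ (x - ξⱼ)` and `D(x) = 1/(x - ζ) - 1/(x - ξ₀)`, the quantity is
`½ x^{-1/2} · x²D(x) + (c / 2iQ) · N(x)/√(x p(x)) · x²D(x)`.
Here `x²D(x) → ζ - ξ₀`, and `N(x)²` and `x p(x)` are both monic of degree `2n + 2`, so
`N(x)/√(x p(x)) → 1`: the first term vanishes and the second tends to `c (ζ - ξ₀) / 2iQ`.
-/

open Complex Filter Topology Asymptotics Bornology Finset

section NormedField

variable {𝕜 : Type*} [NormedField 𝕜]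

lemma isEquivalent_sub_const (a : 𝕜) : (fun z : 𝕜 => z - a) ~[cobounded 𝕜] fun z => z := by
  simpa only [sub_eq_add_neg] using
    IsEquivalent.refl.add_const_of_norm_tendsto_atTop (c := -a) tendsto_norm_cobounded_atTop

lemma isEquivalent_prod_sub_const {ι : Type*} (s : Finset ι) (a : ι → 𝕜) :
    (fun z : 𝕜 => ∏ i ∈ s, (z - a i)) ~[cobounded 𝕜] (· ^ #s) := by
  simpa using IsEquivalent.finsetProd (s := s) fun i _ => isEquivalent_sub_const (a i)

lemma tendsto_sq_mul_one_div_sub_sub_one_div_sub (a b : 𝕜) :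
    Tendsto (fun z : 𝕜 => z ^ 2 * (1 / (z - a) - 1 / (z - b))) (cobounded 𝕜) (𝓝 (a - b)) := by
  have hden : (fun z : 𝕜 => (z - a) * (z - b)) ~[cobounded 𝕜] (· ^ 2) :=
    ((isEquivalent_sub_const a).mul (isEquivalent_sub_const b)).congr_right
      (.of_eq (funext fun z => (sq z).symm))
  have hquot : (fun z : 𝕜 => z ^ 2 / ((z - a) * (z - b))) ~[cobounded 𝕜] fun _ => 1 :=
    (IsEquivalent.refl.div hden).congr_right <| by
      filter_upwards [eventually_ne_cobounded 0] with z hz using div_self (pow_ne_zero 2 hz)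
  have := (hquot.symm.tendsto_nhds tendsto_const_nhds).const_mul (a - b)
  rw [mul_one] at this
  refine this.congr' ?_
  filter_upwards [eventually_ne_cobounded a, eventually_ne_cobounded b] with z ha hb
  field_simp [sub_ne_zero.2 ha, sub_ne_zero.2 hb]
  ring

end NormedField

lemma Asymptotics.IsEquivalent.sqrt {α : Type*} {l : Filter α} {u v : α → ℝ}
    (h : u ~[l] fun x => v x ^ 2) (hv : ∀ᶠ x in l, 0 ≤ v x) :
    (fun x => √(u x)) ~[l] v := by
  refine ((h.rpow (fun x => sq_nonneg (v x)) (r := 1 / 2)).congr_left (.of_eq ?_)).congr_right ?_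
  · ext x; simp [Real.sqrt_eq_rpow]
  · filter_upwards [hv] with x hx
    rw [Pi.pow_apply, ← Real.sqrt_eq_rpow, Real.sqrt_sq hx]

lemma isEquivalent_prod_sub_const_atTop {ι : Type*} (s : Finset ι) (a : ι → ℝ) :
    (fun x : ℝ => ∏ i ∈ s, (x - a i)) ~[atTop] (· ^ #s) :=
  (isEquivalent_prod_sub_const s a).comp_tendsto
    (tendsto_id.mono_left IsOrderBornology.atTop_le_cobounded)

lemma tendsto_prod_sub_div_sqrt_mul_sqrt {n : ℕ} (m : ℝ) (k : Fin (2 * n) → ℝ)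
    (ξs : Fin (n + 1) → ℝ) :
    Tendsto (fun x : ℝ => (∏ j, (x - ξs j)) / (√x * √((x - m) * ∏ j, (x - k j))))
      atTop (𝓝 1) := by
  have hN : (fun x : ℝ => ∏ j, (x - ξs j)) ~[atTop] (· ^ (n + 1)) := by
    simpa using isEquivalent_prod_sub_const_atTop univ ξs
  have hNpos : ∀ᶠ x : ℝ in atTop, 0 < ∏ j, (x - ξs j) := by
    filter_upwards [eventually_all.2 fun j => eventually_gt_atTop (ξs j)] with x hx
    exact prod_pos fun j _ => sub_pos.2 (hx j)
  have hm : (fun x : ℝ => x - m) ~[atTop] fun x => x :=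
    (isEquivalent_sub_const m).comp_tendsto
      (tendsto_id.mono_left IsOrderBornology.atTop_le_cobounded)
  have hP : (fun x : ℝ => x * ((x - m) * ∏ j, (x - k j))) ~[atTop] fun x => (x ^ (n + 1)) ^ 2 :=
    (IsEquivalent.refl.mul (hm.mul (isEquivalent_prod_sub_const_atTop univ k))).congr_right
      (.of_eq (funext fun x => by simp only [card_univ, Fintype.card_fin, Pi.mul_apply]; ring))
  have hsqrt := (hP.trans (hN.pow 2).symm).sqrt (hNpos.mono fun _ h => h.le)
  have := ((isEquivalent_iff_tendsto_one (hNpos.mono fun _ h => h.ne')).1 hsqrt).inv₀ one_ne_zero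
  rw [inv_one] at this
  refine this.congr' ?_
  filter_upwards [eventually_ge_atTop 0] with x hx
  simp [Real.sqrt_mul hx]

lemma rpow_three_halves_eq {x : ℝ} (hx : 0 < x) : x ^ ((3 : ℝ) / 2) = x ^ 2 / √x := by
  rw [Real.sqrt_eq_rpow, ← Real.rpow_natCast, ← Real.rpow_sub hx]
  norm_num

theorem stmt18_general (n : ℕ) (m : ℝ)
    (k : Fin (2 * n) → ℝ)
    (ξs : Fin (n + 1) → ℝ) (c ζ : ℂ)
    (hζξ : ∀ j, ζ ≠ ((ξs j : ℝ) : ℂ)) :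
    Tendsto (fun x : ℝ =>
        ((x ^ ((3:ℝ)/2) : ℝ) : ℂ) *
          ((1 / 2) * (1 + (c / (I * (Real.sqrt ((x - m) * ∏ j, (x - k j)) : ℂ)))
                * ∏ j, (((x : ℂ) - (ξs j : ℂ)) / (ζ - (ξs j : ℂ))))
            * (1 / ((x : ℂ) - ζ) - 1 / ((x : ℂ) - (ξs 0 : ℂ)))))
      atTop (nhds (c * (ζ - (ξs 0 : ℂ)) / (2 * I * ∏ j, (ζ - (ξs j : ℂ))))) := by
  set Q := ∏ j, (ζ - (ξs j : ℂ)) with hQdef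
  have hQ : Q ≠ 0 := prod_ne_zero_iff.2 fun j _ => sub_ne_zero.2 (hζξ j)
  have hD : Tendsto (fun x : ℝ => (x : ℂ) ^ 2 * (1 / (x - ζ) - 1 / (x - ξs 0))) atTop
      (𝓝 (ζ - ξs 0)) :=
    (tendsto_sq_mul_one_div_sub_sub_one_div_sub ζ _).comp (RCLike.tendsto_ofReal_atTop_cobounded ℂ)
  have hinv := (continuous_ofReal.tendsto' 0 0 ofReal_zero).comp
    (tendsto_inv_atTop_zero.comp Real.tendsto_sqrt_atTop)
  have hratio := (continuous_ofReal.tendsto' 1 1 ofReal_one).comp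
    (tendsto_prod_sub_div_sqrt_mul_sqrt m k ξs)
  refine Tendsto.congr' ?_ <| by
    convert ((hinv.const_mul (1 / 2)).mul hD).add ((hratio.const_mul (c / (2 * I * Q))).mul hD)
      using 2
    ring
  filter_upwards [eventually_gt_atTop 0, eventually_gt_atTop m,
    eventually_all.2 fun j => eventually_gt_atTop (k j)] with x hx hxm hxk
  have hP : 0 < (x - m) * ∏ j, (x - k j) :=
    mul_pos (sub_pos.2 hxm) (prod_pos fun j _ => sub_pos.2 (hxk j))
  have hsx : ((√x : ℝ) : ℂ) ≠ 0 := ofReal_ne_zero.2 (Real.sqrt_pos.2 hx).ne'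
  have hsP : ((√((x - m) * ∏ j, (x - k j)) : ℝ) : ℂ) ≠ 0 := ofReal_ne_zero.2 (Real.sqrt_pos.2 hP).ne'
  simp only [Function.comp_apply]
  rw [rpow_three_halves_eq hx, prod_div_distrib, ← hQdef]
  generalize √((x - m) * ∏ j, (x - k j)) = s at hsP ⊢
  push_cast
  field_simp

theorem stmt18 (n : ℕ) (hn : 1 ≤ n) (m : ℝ) (hm : 1 < m)
    (k : Fin (2 * n) → ℝ) (hk : ∀ j, k j ≤ 1)
    (ξs : Fin (n + 1) → ℝ) (c ζ : ℂ)
    (hζ : ∀ x : ℝ, m ≤ x → ζ ≠ (x : ℂ)) (hζξ : ∀ j, ζ ≠ ((ξs j : ℝ) : ℂ)) :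
    Tendsto (fun x : ℝ =>
        ((x ^ ((3:ℝ)/2) : ℝ) : ℂ) *
          ((1 / 2) * (1 + (c / (I * (Real.sqrt ((x - m) * ∏ j, (x - k j)) : ℂ)))
                * ∏ j, (((x : ℂ) - (ξs j : ℂ)) / (ζ - (ξs j : ℂ))))
            * (1 / ((x : ℂ) - ζ) - 1 / ((x : ℂ) - (ξs 0 : ℂ)))))
      atTop (nhds (c * (ζ - (ξs 0 : ℂ)) / (2 * I * ∏ j, (ζ - (ξs j : ℂ))))) :=
  stmt18_general n m k ξs c ζ hζξ
end
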